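/- Under Assumption (A), for any families of weighting vectors v_n, w_n ∈ ℝ^{d_n} with sup_n ‖v_n‖₁ < ∞ and sup_n ‖w_n‖₁ < ∞, there exists a constant C (depending on the weighting vectors only through their ℓ1-norms) such that for all n' = 1, 2, …: sup_{n ∈ ℕ} Σ_{k=1}^{n'} Σ_{r=0}^∞ ( f̃_{r+k,0}^{(n)}(v_n,w_n) )² ≤ C (n')^{1−θ}. -/

import Mathlib

/-!
Assumption (A) gives `|c_{nj}^{(ν)}| ≤ √C₀ (j ∨ 1)^{-3/4-θ/2}`, so for `l ≥ 1` the coefficient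
`f_{l,j}` is at most `2 ‖v‖₁ ‖w‖₁ C₀ (j ∨ 1)^{-3/4-θ/2} (j + l)^{-3/4-θ/2}`. Splitting
`(j + l)^{-3/4-θ/2} ≤ (j ∨ 1)^{-1/4} l^{-(1+θ)/2}` makes the sum over `j` converge, so
`|f̃_{l,0}| ≲ l^{-(1+θ)/2}`. Squaring, the sum over `r` is `≲ Σ_r (r + k)^{-1-θ} ≲ k^{-θ}` by the
integral test, and `Σ_{k ≤ n'} k^{-θ} ≲ n'^{1-θ}` by telescoping against the concave `x^{1-θ}`.
-/

open MeasureTheory Filter Finset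

noncomputable section

/-- The bilinear coefficient functionals `f_{l,j}^{(n)}(v,w)`. -/
def fCoef (d : ℕ → ℕ) (c : ℕ → ℕ → ℕ → ℝ) (n : ℕ) (v w : ℕ → ℝ) (l j : ℕ) : ℝ :=
  if l = 0 then
    ∑ ν ∈ Finset.range (d n), ∑ μ ∈ Finset.range (d n), v ν * w μ * (c n ν j * c n μ j)
  else
    ∑ ν ∈ Finset.range (d n), ∑ μ ∈ Finset.range (d n),
      v ν * w μ * (c n ν j * c n μ (j + l) + c n μ j * c n ν (j + l))

/-- `f̃_{l,i}^{(n)}(v,w) = Σ_{j=i}^∞ f_{l,j}^{(n)}(v,w)`. -/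
def ftil (d : ℕ → ℕ) (c : ℕ → ℕ → ℕ → ℝ) (n : ℕ) (v w : ℕ → ℝ) (l i : ℕ) : ℝ :=
  ∑' j : ℕ, fCoef d c n v w l (i + j)

/-- Assumption (A): `sup_n max_{1≤ν≤d_n} |c_{nj}^{(ν)}|² ≤ C₀ (j ∨ 1)^{−3/2−θ}`. -/
def AssumptionA (d : ℕ → ℕ) (c : ℕ → ℕ → ℕ → ℝ) (θ : ℝ) : Prop :=
  ∃ C₀ > (0 : ℝ), ∀ n j : ℕ, ∀ ν < d n,
    (c n ν j) ^ 2 ≤ C₀ * ((max j 1 : ℕ) : ℝ) ^ (-(3 / 2 : ℝ) - θ)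

open Real

lemma mul_rpow_sub_one_le_rpow_sub_rpow {p x : ℝ} (hp0 : 0 ≤ p) (hp1 : p ≤ 1) (hx : 1 ≤ x) :
    p * x ^ (p - 1) ≤ x ^ p - (x - 1) ^ p := by
  have hx0 : 0 < x := by linarith
  have hb := rpow_one_add_le_one_add_mul_self (s := -x⁻¹)
    (neg_le_neg (inv_le_one_of_one_le₀ hx)) hp0 hp1
  rw [show 1 + -x⁻¹ = (x - 1) / x by field_simp; ring, div_rpow (by linarith) hx0.le,
    div_le_iff₀ (rpow_pos_of_pos hx0 p)] at hb
  have hxp : x ^ p = x ^ (p - 1) * x := by rw [← rpow_add_one hx0.ne', sub_add_cancel]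
  have hexp : (1 + p * -x⁻¹) * x ^ p = x ^ p - p * x ^ (p - 1) := by
    rw [hxp]; field_simp; ring
  linarith

lemma sum_Icc_rpow_neg_le {θ : ℝ} (hθ0 : 0 ≤ θ) (hθ1 : θ < 1) (n : ℕ) :
    ∑ k ∈ Icc 1 n, (k : ℝ) ^ (-θ) ≤ (n : ℝ) ^ (1 - θ) / (1 - θ) := by
  have h1θ : 0 < 1 - θ := by linarith
  induction n with
  | zero => simp [zero_rpow h1θ.ne']
  | succ n ih =>
    have hstep := mul_rpow_sub_one_le_rpow_sub_rpow h1θ.le (by linarith)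
      (show (1 : ℝ) ≤ n + 1 by simp)
    rw [sub_sub_cancel_left, add_sub_cancel_right] at hstep
    rw [sum_Icc_succ_top (by omega), le_div_iff₀ h1θ]
    rw [le_div_iff₀ h1θ] at ih
    push_cast
    linarith

lemma tsum_nat_add_rpow_neg_le {θ : ℝ} (hθ : 0 < θ) {k : ℕ} (hk : 1 ≤ k) :
    ∑' r : ℕ, ((r + k : ℕ) : ℝ) ^ (-(1 + θ)) ≤ (1 + 1 / θ) * (k : ℝ) ^ (-θ) := by
  have hk0 : (0 : ℝ) < k := by exact_mod_cast hk
  have hexp : -(1 + θ) < -1 := by linarith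
  have hsum : Summable fun r : ℕ => ((r + k : ℕ) : ℝ) ^ (-(1 + θ)) :=
    (summable_nat_add_iff k).2 (summable_nat_rpow.2 hexp)
  have hanti : AntitoneOn (fun x : ℝ => x ^ (-(1 + θ))) (Set.Ici (k : ℝ)) :=
    fun x hx y _ hxy => rpow_le_rpow_of_nonpos (hk0.trans_le hx) hxy (by linarith)
  have htail := hanti.tsum_comp_add_le_integral k (integrableOn_Ioi_rpow_of_lt hexp hk0)
    fun x hx => rpow_nonneg (hk0.trans (Set.mem_Ioi.1 hx)).le _
  rw [integral_Ioi_rpow_of_lt hexp hk0, show -(1 + θ) + 1 = -θ by ring] at htail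
  have hhead : (k : ℝ) ^ (-(1 + θ)) ≤ (k : ℝ) ^ (-θ) :=
    rpow_le_rpow_of_exponent_le (by exact_mod_cast hk) (by linarith)
  rw [hsum.tsum_eq_zero_add]
  simp only [zero_add, add_right_comm _ 1 k]
  calc (k : ℝ) ^ (-(1 + θ)) + ∑' r : ℕ, ((r + k + 1 : ℕ) : ℝ) ^ (-(1 + θ))
      ≤ (k : ℝ) ^ (-θ) + -(k : ℝ) ^ (-θ) / -θ := add_le_add hhead htail
    _ = (1 + 1 / θ) * (k : ℝ) ^ (-θ) := by field_simp

lemma sum_Icc_tsum_sq_le {θ B : ℝ} (hθ0 : 0 < θ) (hθ1 : θ < 1) {g : ℕ → ℝ}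
    (hg : ∀ l, 1 ≤ l → |g l| ≤ B * (l : ℝ) ^ (-((1 + θ) / 2))) (n : ℕ) :
    ∑ k ∈ Icc 1 n, ∑' r : ℕ, g (r + k) ^ 2
      ≤ B ^ 2 * (1 + 1 / θ) / (1 - θ) * (n : ℝ) ^ (1 - θ) := by
  have hsq : ∀ l, 1 ≤ l → g l ^ 2 ≤ B ^ 2 * (l : ℝ) ^ (-(1 + θ)) := fun l hl => by
    calc g l ^ 2 = |g l| ^ 2 := (sq_abs _).symm
      _ ≤ (B * (l : ℝ) ^ (-((1 + θ) / 2))) ^ 2 := pow_le_pow_left₀ (abs_nonneg _) (hg l hl) 2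
      _ = B ^ 2 * (l : ℝ) ^ (-(1 + θ)) := by
        rw [mul_pow, ← rpow_mul_natCast (Nat.cast_nonneg l)]
        norm_num [neg_div, div_mul_cancel₀]
  have htail : ∀ k, 1 ≤ k → ∑' r : ℕ, g (r + k) ^ 2 ≤ B ^ 2 * (1 + 1 / θ) * (k : ℝ) ^ (-θ) :=
    fun k hk => by
      have hmaj : Summable fun r : ℕ => B ^ 2 * ((r + k : ℕ) : ℝ) ^ (-(1 + θ)) :=
        ((summable_nat_add_iff k).2 (summable_nat_rpow.2 (by linarith))).mul_left _
      have hle : ∀ r, g (r + k) ^ 2 ≤ B ^ 2 * ((r + k : ℕ) : ℝ) ^ (-(1 + θ)) :=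
        fun r => hsq (r + k) (by omega)
      calc ∑' r : ℕ, g (r + k) ^ 2
          ≤ ∑' r : ℕ, B ^ 2 * ((r + k : ℕ) : ℝ) ^ (-(1 + θ)) :=
            (hmaj.of_nonneg_of_le (fun _ => sq_nonneg _) hle).tsum_le_tsum hle hmaj
        _ ≤ B ^ 2 * ((1 + 1 / θ) * (k : ℝ) ^ (-θ)) := by
            rw [tsum_mul_left]
            gcongr
            exact tsum_nat_add_rpow_neg_le hθ0 hk
        _ = B ^ 2 * (1 + 1 / θ) * (k : ℝ) ^ (-θ) := by ring
  calc ∑ k ∈ Icc 1 n, ∑' r : ℕ, g (r + k) ^ 2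
      ≤ ∑ k ∈ Icc 1 n, B ^ 2 * (1 + 1 / θ) * (k : ℝ) ^ (-θ) :=
        sum_le_sum fun k hk => htail k (mem_Icc.1 hk).1
    _ ≤ B ^ 2 * (1 + 1 / θ) * ((n : ℝ) ^ (1 - θ) / (1 - θ)) := by
        rw [← mul_sum]
        gcongr
        exact sum_Icc_rpow_neg_le hθ0.le hθ1 n
    _ = B ^ 2 * (1 + 1 / θ) / (1 - θ) * (n : ℝ) ^ (1 - θ) := by ring

lemma abs_le_sqrt_mul_rpow_of_sq_le {a C x e : ℝ} (hC : 0 ≤ C) (hx : 0 ≤ x)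
    (h : a ^ 2 ≤ C * x ^ (2 * e)) : |a| ≤ √C * x ^ e := by
  rw [← sqrt_sq (rpow_nonneg hx e), ← sqrt_mul hC, ← rpow_mul_natCast hx]
  exact abs_le_sqrt (by rwa [mul_comm e])

lemma rpow_neg_add_le_mul_rpow_neg {x y z α β : ℝ} (hy : 0 < y) (hz : 0 < z) (hyx : y ≤ x)
    (hzx : z ≤ x) (hα : 0 ≤ α) (hβ : 0 ≤ β) :
    x ^ (-(α + β)) ≤ y ^ (-α) * z ^ (-β) := by
  rw [neg_add, rpow_add (hy.trans_le hyx)]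
  exact mul_le_mul (rpow_le_rpow_of_nonpos hy hyx (by linarith))
    (rpow_le_rpow_of_nonpos hz hzx (by linarith)) (rpow_nonneg (hz.trans_le hzx).le _)
    (rpow_nonneg hy.le _)

lemma abs_fCoef_le {d : ℕ → ℕ} {c : ℕ → ℕ → ℕ → ℝ} {n : ℕ} {v w : ℕ → ℝ} {l j : ℕ}
    {b : ℕ → ℝ} (hl : l ≠ 0) (hb : ∀ ν < d n, ∀ i, |c n ν i| ≤ b i) :
    |fCoef d c n v w l j|
      ≤ 2 * (∑ ν ∈ range (d n), |v ν|) * (∑ μ ∈ range (d n), |w μ|) * (b j * b (j + l)) := by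
  have hprod : ∀ ν ∈ range (d n), ∀ μ ∈ range (d n), |c n ν j * c n μ (j + l)| ≤ b j * b (j + l) :=
    fun ν hν μ hμ => by
      rw [abs_mul]
      exact mul_le_mul (hb ν (mem_range.1 hν) j) (hb μ (mem_range.1 hμ) _) (abs_nonneg _)
        ((abs_nonneg _).trans (hb ν (mem_range.1 hν) j))
  rw [fCoef, if_neg hl, mul_assoc 2, mul_comm 2, mul_assoc, sum_mul_sum, sum_mul]
  refine (abs_sum_le_sum_abs _ _).trans (sum_le_sum fun ν hν => ?_)
  rw [sum_mul]
  refine (abs_sum_le_sum_abs _ _).trans (sum_le_sum fun μ hμ => ?_)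
  rw [abs_mul, abs_mul]
  refine mul_le_mul_of_nonneg_left ?_ (by positivity)
  calc _ ≤ |c n ν j * c n μ (j + l)| + |c n μ j * c n ν (j + l)| := abs_add_le _ _
    _ ≤ 2 * (b j * b (j + l)) := by linarith [hprod ν hν μ hμ, hprod μ hμ ν hν]

lemma summable_max_one_rpow {p : ℝ} (hp : p < -1) :
    Summable fun j : ℕ => ((max j 1 : ℕ) : ℝ) ^ p := by
  refine (summable_nat_add_iff 1).1 ?_
  simpa [Nat.max_eq_left (Nat.le_add_left 1 _)] using
    (summable_nat_add_iff 1).2 (summable_nat_rpow.2 hp)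

lemma exists_abs_ftil_le {d : ℕ → ℕ} {c : ℕ → ℕ → ℕ → ℝ} {θ : ℝ} (hθ : 0 < θ)
    (hA : AssumptionA d c θ) {v w : ℕ → ℕ → ℝ} {Kv Kw : ℝ}
    (hv : ∀ n, ∑ ν ∈ range (d n), |v n ν| ≤ Kv) (hw : ∀ n, ∑ ν ∈ range (d n), |w n ν| ≤ Kw) :
    ∃ B, ∀ n l, 1 ≤ l → |ftil d c n (v n) (w n) l 0| ≤ B * (l : ℝ) ^ (-((1 + θ) / 2)) := by
  obtain ⟨C₀, hC₀, hC⟩ := hA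
  have hKv : 0 ≤ Kv := (sum_nonneg fun _ _ => abs_nonneg _).trans (hv 0)
  have hKw : 0 ≤ Kw := (sum_nonneg fun _ _ => abs_nonneg _).trans (hw 0)
  have hc : ∀ n, ∀ ν < d n, ∀ i, |c n ν i| ≤ √C₀ * ((max i 1 : ℕ) : ℝ) ^ (-(3 / 4 + θ / 2)) :=
    fun n ν hν i => abs_le_sqrt_mul_rpow_of_sq_le hC₀.le (by positivity)
      (by convert hC n i ν hν using 3; ring)
  have hS := summable_max_one_rpow (p := -(1 + θ / 2)) (by linarith)
  refine ⟨2 * Kv * Kw * C₀ * ∑' j : ℕ, ((max j 1 : ℕ) : ℝ) ^ (-(1 + θ / 2)), fun n l hl => ?_⟩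
  have hterm : ∀ j, ‖fCoef d c n (v n) (w n) l (0 + j)‖
      ≤ 2 * Kv * Kw * C₀ * (l : ℝ) ^ (-((1 + θ) / 2)) * ((max j 1 : ℕ) : ℝ) ^ (-(1 + θ / 2)) :=
    fun j => by
      have hmj : (0 : ℝ) < ((max j 1 : ℕ) : ℝ) := by positivity
      have hsplit : ((max (j + l) 1 : ℕ) : ℝ) ^ (-(3 / 4 + θ / 2))
          ≤ ((max j 1 : ℕ) : ℝ) ^ (-(1 / 4 : ℝ)) * (l : ℝ) ^ (-((1 + θ) / 2)) := by
        rw [show 3 / 4 + θ / 2 = 1 / 4 + (1 + θ) / 2 by ring]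
        exact rpow_neg_add_le_mul_rpow_neg hmj (by exact_mod_cast hl)
          (by exact_mod_cast (by omega : max j 1 ≤ max (j + l) 1))
          (by exact_mod_cast (by omega : l ≤ max (j + l) 1)) (by norm_num) (by linarith)
      calc ‖fCoef d c n (v n) (w n) l (0 + j)‖
          ≤ 2 * (∑ ν ∈ range (d n), |v n ν|) * (∑ μ ∈ range (d n), |w n μ|)
            * (√C₀ * ((max j 1 : ℕ) : ℝ) ^ (-(3 / 4 + θ / 2))
              * (√C₀ * ((max (j + l) 1 : ℕ) : ℝ) ^ (-(3 / 4 + θ / 2)))) := by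
            rw [zero_add, norm_eq_abs]
            exact abs_fCoef_le (by omega) (hc n)
        _ = 2 * (∑ ν ∈ range (d n), |v n ν|) * (∑ μ ∈ range (d n), |w n μ|)
            * (C₀ * (((max j 1 : ℕ) : ℝ) ^ (-(3 / 4 + θ / 2))
              * ((max (j + l) 1 : ℕ) : ℝ) ^ (-(3 / 4 + θ / 2)))) := by
            rw [mul_mul_mul_comm √C₀, mul_self_sqrt hC₀.le]
        _ ≤ 2 * Kv * Kw * (C₀ * (((max j 1 : ℕ) : ℝ) ^ (-(3 / 4 + θ / 2))
              * (((max j 1 : ℕ) : ℝ) ^ (-(1 / 4 : ℝ)) * (l : ℝ) ^ (-((1 + θ) / 2))))) := by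
            gcongr
            exacts [hv n, hw n]
        _ = 2 * Kv * Kw * C₀ * (l : ℝ) ^ (-((1 + θ) / 2))
              * ((max j 1 : ℕ) : ℝ) ^ (-(1 + θ / 2)) := by
            rw [← mul_assoc (_ ^ _), ← rpow_add hmj]
            ring_nf
  exact (tsum_of_norm_bounded (hS.hasSum.mul_left _) hterm).trans_eq (by ring)

/-- bound (Ass2) of the technical lemma. -/
theorem stmt1 (d : ℕ → ℕ) (c : ℕ → ℕ → ℕ → ℝ) (θ : ℝ) (hθ0 : 0 < θ) (hθ : θ < 1 / 2)
    (hA : AssumptionA d c θ) (v w : ℕ → ℕ → ℝ) (Kv Kw : ℝ)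
    (hv : ∀ n, ∑ ν ∈ Finset.range (d n), |v n ν| ≤ Kv)
    (hw : ∀ n, ∑ ν ∈ Finset.range (d n), |w n ν| ≤ Kw) :
    ∃ C : ℝ, ∀ n n' : ℕ, 1 ≤ n' →
      ∑ k ∈ Finset.Icc 1 n', ∑' r : ℕ,
        (ftil d c n (v n) (w n) (r + k) 0) ^ 2
        ≤ C * (n' : ℝ) ^ ((1 : ℝ) - θ) := by
  obtain ⟨B, hB⟩ := exists_abs_ftil_le hθ0 hA hv hw
  exact ⟨_, fun n n' _ => sum_Icc_tsum_sq_le hθ0 (by linarith) (hB n) n'⟩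

end
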